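/- Suppose s is a binary string that is (ε,k,m)*-normal with m − k ≥ 2 and ε < 1/6. Then each of the strings s+1 and s+2 (interpreting s as a binary representation of an integer and keeping the same length) can be decomposed as the concatenation of an (ε,k,m)-normal string and a string of length at most m+2. -/

import Mathlib

/-- `occCount u w`: the number of occurrences of `u` as a contiguous subword of `w`. -/
def occCount {α : Type*} [DecidableEq α] (u w : List α) : ℕ :=
  ((Finset.range (w.length + 1)).filter (fun i => (w.drop i).take u.length = u)).card

/-- A binary string `s` is `(ε,k)`-normal: every word `u` of length `k` occurs in `s`
with frequency within `ε` of `2^{−k}`. -/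
def EpsKNormal (ε : ℝ) (k : ℕ) (s : List (Fin 2)) : Prop :=
  ∀ u : List (Fin 2), u.length = k →
    |((occCount u s : ℝ)) / ((s.length : ℝ) - (k : ℝ) + 1) - ((2 : ℝ) ^ k)⁻¹| ≤ ε

/-- `(ε,k,m)`-normal: every nonempty prefix whose length is a multiple of `m` is
`(ε,k)`-normal. -/
def EpsKMNormal (ε : ℝ) (k m : ℕ) (s : List (Fin 2)) : Prop :=
  ∀ j : ℕ, 0 < j → j * m ≤ s.length → EpsKNormal ε k (s.take (j * m))

/-- `(ε,k,m)*`-normal: both `s` and its reversal are `(ε,k,m)`-normal. -/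
def EpsKMStarNormal (ε : ℝ) (k m : ℕ) (s : List (Fin 2)) : Prop :=
  EpsKMNormal ε k m s ∧ EpsKMNormal ε k m s.reverse

/-- The `ℓ`-bit big-endian binary representation of `n` (mod `2^ℓ`). -/
def toBits (ℓ n : ℕ) : List (Fin 2) :=
  (List.range ℓ).map (fun i => if Nat.testBit n (ℓ - 1 - i) then 1 else 0)

/-! Adding `c ≤ 2` to `n` changes only the last `m` bits of `n` unless
`n % 2^m ≥ 2^m - 2`, i.e. unless bits `1, …, m-1` of `n` are all ones. Bits `0, …, m-1` are
the first `m` letters of the reversed string, so that window would contain a run of `m - 1`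
ones, in which `1^k` occurs with frequency at least `(m-k)/(m-k+1) ≥ 2/3`: more than `ε` away
from `2^{-k} ≤ 1/2`. Hence the first `ℓ - m` letters of `s + c` are those of `s`, a prefix of
an `(ε,k,m)`-normal string. -/

@[simp]
lemma toBits_length (ℓ n : ℕ) : (toBits ℓ n).length = ℓ := by simp [toBits]

@[simp]
lemma toBits_getElem (ℓ n i : ℕ) (h : i < (toBits ℓ n).length) :
    (toBits ℓ n)[i] = if n.testBit (ℓ - 1 - i) then 1 else 0 := by
  simp [toBits]

lemma reverse_toBits_getElem (ℓ n i : ℕ) (h : i < (toBits ℓ n).reverse.length) :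
    (toBits ℓ n).reverse[i] = if n.testBit i then 1 else 0 := by
  simp only [List.length_reverse, toBits_length] at h
  rw [List.getElem_reverse, toBits_getElem, toBits_length]
  congr 3
  omega

lemma toBits_take_eq_of_div_eq {ℓ D a b : ℕ} (h : a / 2 ^ D = b / 2 ^ D) :
    (toBits ℓ a).take (ℓ - D) = (toBits ℓ b).take (ℓ - D) := by
  have hbits : ∀ i, D ≤ i → a.testBit i = b.testBit i := fun i hi => by
    obtain ⟨j, rfl⟩ := Nat.exists_eq_add_of_le hi
    rw [← Nat.testBit_shiftRight, ← Nat.testBit_shiftRight, Nat.shiftRight_eq_div_pow,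
      Nat.shiftRight_eq_div_pow, h]
  apply List.ext_getElem (by simp)
  intro i h1 h2
  simp only [List.length_take, toBits_length] at h1
  simp only [List.getElem_take, toBits_getElem, hbits (ℓ - 1 - i) (by omega)]

lemma testBit_of_two_pow_sub_two_le_mod {n m i : ℕ} (h : 2 ^ m - 2 ≤ n % 2 ^ m)
    (hi₁ : 1 ≤ i) (hi₂ : i < m) : n.testBit i := by
  obtain ⟨j, rfl⟩ : ∃ j, i = j + 1 := ⟨i - 1, by omega⟩
  obtain ⟨p, rfl⟩ : ∃ p, m = p + 1 := ⟨m - 1, by omega⟩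
  have hhalf : n % 2 ^ (p + 1) / 2 = 2 ^ p - 1 := by
    have := Nat.mod_lt n (Nat.two_pow_pos (p + 1))
    rw [pow_succ] at h this ⊢
    omega
  have := Nat.testBit_mod_two_pow n (p + 1) (j + 1)
  rw [← Nat.testBit_div_two, hhalf, Nat.testBit_two_pow_sub_one] at this
  simpa [hi₂, show j < p by omega] using this.symm

lemma epsKMNormal_zero {ε : ℝ} (hε : 0 ≤ ε) (m : ℕ) (w : List (Fin 2)) :
    EpsKMNormal ε 0 m w := by
  intro j _ _ u hu
  rw [List.length_eq_zero_iff.mp hu]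
  have hocc : occCount ([] : List (Fin 2)) (w.take (j * m)) = (w.take (j * m)).length + 1 := by
    simp [occCount]
  have hden : ((w.take (j * m)).length : ℝ) + 1 ≠ 0 := by positivity
  simpa only [hocc, Nat.cast_add, Nat.cast_one, CharP.cast_eq_zero, sub_zero, pow_zero, inv_one,
    div_self hden, sub_self, abs_zero] using hε

lemma epsKMNormal_of_length_lt {ε : ℝ} {k m : ℕ} {w : List (Fin 2)} (h : w.length < m) :
    EpsKMNormal ε k m w := fun j hj hjm => absurd hjm (by nlinarith)

lemma EpsKMNormal.take {ε : ℝ} {k m : ℕ} {s : List (Fin 2)} (h : EpsKMNormal ε k m s) (a : ℕ) :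
    EpsKMNormal ε k m (s.take a) := by
  intro j hj hjm
  rw [List.length_take] at hjm
  rw [List.take_take, min_eq_left (by omega)]
  exact h j hj (by omega)

lemma le_occCount_replicate {α : Type*} [DecidableEq α] (x : α) {w : List α} {a L k : ℕ}
    (hk : k ≤ L) (hL : a + L ≤ w.length)
    (hrun : ∀ i (h : i < w.length), a ≤ i → i < a + L → w[i] = x) :
    L + 1 - k ≤ occCount (List.replicate k x) w := by
  have hsub : Finset.Icc a (a + L - k) ⊆
      (Finset.range (w.length + 1)).filter
        (fun i => (w.drop i).take (List.replicate k x).length = List.replicate k x) := by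
    intro i hi
    simp only [Finset.mem_Icc] at hi
    simp only [Finset.mem_filter, Finset.mem_range, List.length_replicate]
    refine ⟨by omega, List.ext_getElem (by simp; omega) fun j h₁ h₂ => ?_⟩
    simp only [List.length_replicate] at h₂
    rw [List.getElem_take, List.getElem_drop, List.getElem_replicate,
      hrun _ _ (by omega) (by omega)]
  calc L + 1 - k = (Finset.Icc a (a + L - k)).card := by simp; omega
    _ ≤ occCount (List.replicate k x) w := Finset.card_le_card hsub

lemma not_epsKNormal_of_getElem_eq_one {ε : ℝ} (hε : ε < 1 / 6) {k : ℕ} (hk : 1 ≤ k)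
    {w : List (Fin 2)} (hlen : k + 2 ≤ w.length)
    (hw : ∀ i (h : i < w.length), 1 ≤ i → w[i] = 1) :
    ¬ EpsKNormal ε k w := by
  intro hnormal
  have hlenR : (k : ℝ) + 2 ≤ w.length := by exact_mod_cast hlen
  have hocc : w.length - k ≤ occCount (List.replicate k 1) w := by
    have := le_occCount_replicate (1 : Fin 2) (w := w) (a := 1) (L := w.length - 1) (k := k)
      (by omega) (by omega) fun i h h₁ _ => hw i h h₁
    omega
  have hoccR : (w.length : ℝ) - k ≤ occCount (List.replicate k 1) w := by
    rw [← Nat.cast_sub (by omega)]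
    exact_mod_cast hocc
  have hfreq : (2 : ℝ) / 3 ≤ occCount (List.replicate k 1) w / (w.length - k + 1) := by
    rw [le_div_iff₀ (by linarith)]
    linarith
  have hpow : ((2 : ℝ) ^ k)⁻¹ ≤ 1 / 2 := by
    rw [one_div]
    exact inv_anti₀ (by norm_num) (le_self_pow₀ (by norm_num) (by omega))
  have hclose := (abs_le.mp (hnormal (List.replicate k 1) (List.length_replicate ..))).2
  linarith

lemma EpsKMNormal.exists_toBits_eq_append {ε : ℝ} {k m ℓ n n' D : ℕ}
    (hs : EpsKMNormal ε k m (toBits ℓ n)) (h : n' / 2 ^ D = n / 2 ^ D) :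
    ∃ t r : List (Fin 2), toBits ℓ n' = t ++ r ∧ EpsKMNormal ε k m t ∧ r.length ≤ D :=
  ⟨_, _, (List.take_append_drop (ℓ - D) _).symm, toBits_take_eq_of_div_eq h ▸ hs.take _,
    by simp; omega⟩

lemma mod_two_pow_add_two_lt {ε : ℝ} (hε : ε < 1 / 6) {k m ℓ n : ℕ} (hk : 1 ≤ k)
    (hkm : k + 2 ≤ m) (hℓ : m ≤ ℓ) (hrev : EpsKMNormal ε k m (toBits ℓ n).reverse) :
    n % 2 ^ m + 2 < 2 ^ m := by
  by_contra! h
  refine not_epsKNormal_of_getElem_eq_one hε hk (w := (toBits ℓ n).reverse.take m)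
    (by simp; omega) (fun i hi h₁ => ?_) (by simpa using hrev 1 one_pos (by simpa using hℓ))
  simp only [List.length_take, List.length_reverse, toBits_length] at hi
  rw [List.getElem_take, reverse_toBits_getElem,
    if_pos (testBit_of_two_pow_sub_two_le_mod (m := m) (by omega) h₁ (by omega))]

theorem add_one_two_preserves_normality_general (ε : ℝ) (hε0 : 0 < ε) (hε : ε < 1 / 6)
    (k m ℓ n : ℕ) (hkm : k + 2 ≤ m)
    (hs : EpsKMStarNormal ε k m (toBits ℓ n)) :
    (∃ t r : List (Fin 2), toBits ℓ (n + 1) = t ++ r ∧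
        EpsKMNormal ε k m t ∧ r.length ≤ m + 2) ∧
    (∃ t r : List (Fin 2), toBits ℓ (n + 2) = t ++ r ∧
        EpsKMNormal ε k m t ∧ r.length ≤ m + 2) := by
  suffices key : ∀ c ≤ 2, ∃ t r : List (Fin 2), toBits ℓ (n + c) = t ++ r ∧
      EpsKMNormal ε k m t ∧ r.length ≤ m + 2 from ⟨key 1 (by norm_num), key 2 le_rfl⟩
  intro c hc
  have of_whole (h : EpsKMNormal ε k m (toBits ℓ (n + c))) :
      ∃ t r : List (Fin 2), toBits ℓ (n + c) = t ++ r ∧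
        EpsKMNormal ε k m t ∧ r.length ≤ m + 2 :=
    ⟨_, [], (List.append_nil _).symm, h, by simp⟩
  rcases Nat.eq_zero_or_pos k with rfl | hk
  · exact of_whole (epsKMNormal_zero hε0.le _ _)
  rcases lt_or_ge ℓ m with hℓ | hℓ
  · exact of_whole (epsKMNormal_of_length_lt (by simpa using hℓ))
  have hmod := mod_two_pow_add_two_lt hε hk hkm hℓ hs.2
  have hc_mod := Nat.mod_le c (2 ^ m)
  have hdiv : (n + c) / 2 ^ m = n / 2 ^ m := by
    rw [Nat.add_div_eq_of_add_mod_lt (by omega), Nat.div_eq_of_lt (a := c) (by omega), add_zero]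
  obtain ⟨t, r, heq, ht, hr⟩ := hs.1.exists_toBits_eq_append hdiv
  exact ⟨t, r, heq, ht, by omega⟩

/-- If `s` (the `ℓ`-bit representation of `n`) is `(ε,k,m)*`-normal with `m − k ≥ 2` and
`ε < 1/6`, then each of `s+1` and `s+2` (same length) decomposes as an `(ε,k,m)`-normal
string followed by a string of length at most `m+2`. -/
theorem add_one_two_preserves_normality (ε : ℝ) (hε0 : 0 < ε) (hε : ε < 1 / 6)
    (k m ℓ n : ℕ) (hkm : k + 2 ≤ m) (hn : n < 2 ^ ℓ)
    (hs : EpsKMStarNormal ε k m (toBits ℓ n)) :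
    (∃ t r : List (Fin 2), toBits ℓ (n + 1) = t ++ r ∧
        EpsKMNormal ε k m t ∧ r.length ≤ m + 2) ∧
    (∃ t r : List (Fin 2), toBits ℓ (n + 2) = t ++ r ∧
        EpsKMNormal ε k m t ∧ r.length ≤ m + 2) :=
  add_one_two_preserves_normality_general ε hε0 hε k m ℓ n hkm hs
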